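/- arXiv:math/0609351 — 8 statements merged into one kernel-verified Lean document; each statement's English description precedes it below -/
import Mathlib

section
/- A subset of the real line is nowhere dense with respect to the Sorgenfrey (lower limit) topology if and only if it is nowhere dense with respect to the Euclidean topology. More generally, for every natural number n, a subset of ℝⁿ is nowhere dense in the product of n copies of the Sorgenfrey line if and only if it is nowhere dense in the Euclidean product topology on ℝⁿ. -/
/-!
Every Euclidean open set is Sorgenfrey open, and every nonempty Sorgenfrey open set contains a
nonempty Euclidean one: `(x, b) ⊆ [x, b)`, and in `ℝⁿ` a box of such intervals.
For any finer topology with this property, an open set of the coarser topology contained in the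
coarser closure of `s` lies in the finer closure too, because every finer-open set meeting it
contains a coarser-open set meeting it; conversely a finer-open set inside the finer closure can
be shrunk to a nonempty coarser-open one. So the closure of `s` has nonempty interior in one
topology iff it does in the other.
-/

open Topology

/-- The Sorgenfrey (lower limit) topology on `ℝ`, generated by the half-open
intervals `[a, b)`. -/
def sorgenfreyTopology : TopologicalSpace ℝ :=
  TopologicalSpace.generateFrom {s : Set ℝ | ∃ a b : ℝ, s = Set.Ico a b}

/-- The product of `n` copies of the Sorgenfrey line, as a topology on `Fin n → ℝ`. -/
def sorgenfreyPiTopology (n : ℕ) : TopologicalSpace (Fin n → ℝ) :=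
  @Pi.topologicalSpace (Fin n) (fun _ => ℝ) (fun _ => sorgenfreyTopology)

open Set Filter TopologicalSpace

/-- The `e`-open sets form a π-base of the finer topology `t`. -/
structure IsOpensPiBase {α : Type*} (e t : TopologicalSpace α) : Prop where
  le : t ≤ e
  exists_isOpen_subset :
    ∀ U, IsOpen[t] U → U.Nonempty → ∃ V, IsOpen[e] V ∧ V.Nonempty ∧ V ⊆ U

namespace IsOpensPiBase

variable {α : Type*} {e t : TopologicalSpace α}

theorem subset_closure_of_subset_closure (h : IsOpensPiBase e t) {U s : Set α}
    (hU : IsOpen[t] U) (hUs : U ⊆ closure[e] s) : U ⊆ closure[t] s := by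
  intro x hx
  rw [@mem_closure_iff α t]
  intro W hW hxW
  obtain ⟨V, hV, ⟨y, hyV⟩, hVWU⟩ :=
    h.exists_isOpen_subset (W ∩ U) (@IsOpen.inter α t _ _ hW hU) ⟨x, hxW, hx⟩
  obtain ⟨z, hzV, hzs⟩ := (@mem_closure_iff α e _ _).1 (hUs (hVWU hyV).2) V hV hyV
  exact ⟨z, (hVWU hzV).1, hzs⟩

theorem isNowhereDense_iff (h : IsOpensPiBase e t) {s : Set α} :
    @IsNowhereDense α t s ↔ @IsNowhereDense α e s := by
  simp only [IsNowhereDense, ← not_nonempty_iff_eq_empty, not_iff_not]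
  constructor
  · rintro ⟨x, hx⟩
    obtain ⟨V, hV, hVne, hVU⟩ := h.exists_isOpen_subset _ (@isOpen_interior α t _) ⟨x, hx⟩
    exact hVne.mono <| (@IsOpen.subset_interior_iff α e _ _ hV).2 <|
      hVU.trans <| (@interior_subset α t _).trans (closure.mono h.le)
  · rintro ⟨x, hx⟩
    have hU : IsOpen[t] (@interior α e (closure[e] s)) :=
      TopologicalSpace.le_def.1 h.le _ (@isOpen_interior α e _)
    exact ⟨x, (@IsOpen.subset_interior_iff α t _ _ hU).2
      (h.subset_closure_of_subset_closure hU (@interior_subset α e _)) hx⟩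

theorem pi {ι : Type*} {A : ι → Type*} {e t : ∀ i, TopologicalSpace (A i)}
    (h : ∀ i, IsOpensPiBase (e i) (t i)) :
    IsOpensPiBase (Pi.topologicalSpace (t₂ := e)) (Pi.topologicalSpace (t₂ := t)) := by
  refine ⟨iInf_mono fun i => induced_mono (h i).le, ?_⟩
  rintro U hU ⟨x, hx⟩
  obtain ⟨I, u, hu, hIu⟩ := (@isOpen_pi_iff ι A t U).1 hU x hx
  have hbox : ∀ i, ∃ v : Set (A i), IsOpen[e i] v ∧ v.Nonempty ∧ (i ∈ I → v ⊆ u i) := by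
    intro i
    by_cases hi : i ∈ I
    · obtain ⟨v, hv, hvne, hvu⟩ := (h i).exists_isOpen_subset _ (hu i hi).1 ⟨x i, (hu i hi).2⟩
      exact ⟨v, hv, hvne, fun _ => hvu⟩
    · exact ⟨univ, @isOpen_univ _ (e i), ⟨x i, trivial⟩, fun hi' => absurd hi' hi⟩
  choose v hv hvne hvu using hbox
  exact ⟨(I : Set ι).pi v, @isOpen_set_pi ι A e _ _ I.finite_toSet fun i _ => hv i,
    pi_nonempty_iff.2 fun i => (hvne i).imp fun _ hy _ => hy,
    (pi_mono fun i hi => hvu i hi).trans hIu⟩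

end IsOpensPiBase

theorem nhds_sorgenfrey (x : ℝ) : @nhds ℝ sorgenfreyTopology x = 𝓝[≥] x := by
  refine le_antisymm ?_ ?_
  · rw [(nhdsGE_basis_Ico x).ge_iff]
    exact fun b hxb => @IsOpen.mem_nhds ℝ sorgenfreyTopology _ _
      (isOpen_generateFrom_of_mem ⟨x, b, rfl⟩) ⟨le_rfl, hxb⟩
  · rw [sorgenfreyTopology, nhds_generateFrom]
    refine le_iInf₂ ?_
    rintro _ ⟨hx, a, b, rfl⟩
    exact le_principal_iff.2 (Ico_mem_nhdsGE_of_mem hx)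

theorem isOpensPiBase_sorgenfrey : IsOpensPiBase inferInstance sorgenfreyTopology := by
  refine ⟨(le_iff_nhds _ _).2 fun x => (nhds_sorgenfrey x).trans_le nhdsWithin_le_nhds, ?_⟩
  rintro U hU ⟨x, hx⟩
  obtain ⟨b, hxb, hbU⟩ := (nhdsGE_basis_Ico x).mem_iff.1
    (nhds_sorgenfrey x ▸ @IsOpen.mem_nhds ℝ sorgenfreyTopology _ _ hU hx)
  exact ⟨Ioo x b, isOpen_Ioo, nonempty_Ioo.2 hxb, Ioo_subset_Ico_self.trans hbU⟩

/-- A subset of the real line is nowhere dense in the Sorgenfrey topology iff it is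
nowhere dense in the Euclidean topology; more generally, for every `n`, a subset of `ℝⁿ`
is nowhere dense in the product of `n` copies of the Sorgenfrey line iff it is nowhere
dense in the Euclidean product topology. -/
theorem sorgenfrey_nowhereDense_iff :
    (∀ s : Set ℝ, @IsNowhereDense ℝ sorgenfreyTopology s ↔ IsNowhereDense s) ∧
    (∀ (n : ℕ) (s : Set (Fin n → ℝ)),
      @IsNowhereDense (Fin n → ℝ) (sorgenfreyPiTopology n) s ↔ IsNowhereDense s) :=
  ⟨fun _ => isOpensPiBase_sorgenfrey.isNowhereDense_iff,
    fun _ _ => (IsOpensPiBase.pi fun _ => isOpensPiBase_sorgenfrey).isNowhereDense_iff⟩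
end

section
/- If σ and τ are Π-related topologies on a set X, then a subset of X is σ-nowhere dense if and only if it is τ-nowhere dense. -/
open Topology

/-- `N` is a π-network for the topology `t` on `X`: a family of nonempty subsets of `X`
such that every nonempty `t`-open set contains a member of the family. -/
def IsPiNetwork {X : Type*} (t : TopologicalSpace X) (N : Set (Set X)) : Prop :=
  (∀ s ∈ N, s.Nonempty) ∧ ∀ U : Set X, IsOpen[t] U → U.Nonempty → ∃ s ∈ N, s ⊆ U

/-- Topologies `σ` and `τ` on a set `X` are Π-related if `τ` contains a π-network for
the topology `σ` and `σ` contains a π-network for the topology `τ`. -/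
def PiRelated {X : Type*} (σ τ : TopologicalSpace X) : Prop :=
  (∃ N : Set (Set X), (∀ s ∈ N, IsOpen[τ] s) ∧ IsPiNetwork σ N) ∧
  (∃ N : Set (Set X), (∀ s ∈ N, IsOpen[σ] s) ∧ IsPiNetwork τ N)

/-!
A set is nowhere dense exactly when every nonempty open set contains a nonempty open set
missing it. For Π-related topologies every nonempty open set of either topology contains a
nonempty open set of the other, so this condition passes from `τ` to `σ`: shrink a `σ`-open
set to a `τ`-open one, find a `τ`-open part of it missing `s`, and shrink that again to a
`σ`-open set.
-/

section

variable {X : Type*}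

theorem isNowhereDense_iff_forall_exists_isOpen_subset_disjoint [TopologicalSpace X]
    {s : Set X} :
    IsNowhereDense s ↔
      ∀ U : Set X, IsOpen U → U.Nonempty → ∃ V ⊆ U, IsOpen V ∧ V.Nonempty ∧ Disjoint V s := by
  rw [IsNowhereDense, interior_eq_empty_iff_dense_compl, ← interior_compl, dense_iff_inter_open]
  refine forall₃_congr fun U hU _ => ⟨fun hne => ?_, fun ⟨V, hVU, hV, hVne, hVs⟩ => ?_⟩
  · exact ⟨U ∩ interior sᶜ, Set.inter_subset_left, hU.inter isOpen_interior, hne,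
      Set.subset_compl_iff_disjoint_right.mp (Set.inter_subset_right.trans interior_subset)⟩
  · exact hVne.mono (Set.subset_inter hVU (interior_maximal hVs.subset_compl_right hV))

theorem IsPiNetwork.mono {t : TopologicalSpace X} {N M : Set (Set X)} (hN : IsPiNetwork t N)
    (hNM : N ⊆ M) (hM : ∀ s ∈ M, s.Nonempty) : IsPiNetwork t M :=
  ⟨hM, fun U hU hne => (hN.2 U hU hne).imp fun _ ⟨hs, hsU⟩ => ⟨hNM hs, hsU⟩⟩

theorem isPiNetwork_nonempty_isOpen {σ τ : TopologicalSpace X} {N : Set (Set X)}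
    (hNτ : ∀ s ∈ N, IsOpen[τ] s) (hN : IsPiNetwork σ N) :
    IsPiNetwork σ {V | IsOpen[τ] V ∧ V.Nonempty} :=
  hN.mono (fun s hs => ⟨hNτ s hs, hN.1 s hs⟩) fun _ hs => hs.2

theorem IsNowhereDense.of_isPiNetwork_nonempty_isOpen {σ τ : TopologicalSpace X}
    (hστ : IsPiNetwork σ {V | IsOpen[τ] V ∧ V.Nonempty})
    (hτσ : IsPiNetwork τ {V | IsOpen[σ] V ∧ V.Nonempty}) {s : Set X}
    (hs : @IsNowhereDense X τ s) : @IsNowhereDense X σ s := by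
  rw [@isNowhereDense_iff_forall_exists_isOpen_subset_disjoint X σ]
  rw [@isNowhereDense_iff_forall_exists_isOpen_subset_disjoint X τ] at hs
  intro U hU hUne
  obtain ⟨P, ⟨hP, hPne⟩, hPU⟩ := hστ.2 U hU hUne
  obtain ⟨V, hVP, hV, hVne, hVs⟩ := hs P hP hPne
  obtain ⟨W, ⟨hW, hWne⟩, hWV⟩ := hτσ.2 V hV hVne
  exact ⟨W, hWV.trans (hVP.trans hPU), hW, hWne, hVs.mono_left hWV⟩

end

/-- If `σ` and `τ` are Π-related topologies on a set `X`, then a subset of `X` is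
`σ`-nowhere dense iff it is `τ`-nowhere dense. -/
theorem piRelated_isNowhereDense_iff {X : Type*} (σ τ : TopologicalSpace X)
    (h : PiRelated σ τ) (s : Set X) :
    @IsNowhereDense X σ s ↔ @IsNowhereDense X τ s := by
  obtain ⟨⟨N, hNτ, hN⟩, ⟨M, hMσ, hM⟩⟩ := h
  have hστ := isPiNetwork_nonempty_isOpen hNτ hN
  have hτσ := isPiNetwork_nonempty_isOpen hMσ hM
  exact ⟨.of_isPiNetwork_nonempty_isOpen hτσ hστ, .of_isPiNetwork_nonempty_isOpen hστ hτσ⟩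
end

section
/- Let γ be the cross topology on ℝ × ℝ. Then cof(nwd_γ) > 2^ℵ₀, i.e., for every family {F_α : α < 2^ℵ₀} of γ-nowhere dense subsets of ℝ × ℝ there exists a γ-nowhere dense set contained in no F_α. -/
open Topology Set

/-- The cross topology `γ` on `ℝ × ℝ`: a set is open iff all of its vertical and
horizontal sections are open in `ℝ`. -/
def crossTopology : TopologicalSpace (ℝ × ℝ) where
  IsOpen G := (∀ x : ℝ, IsOpen {y : ℝ | (x, y) ∈ G}) ∧ (∀ y : ℝ, IsOpen {x : ℝ | (x, y) ∈ G})
  isOpen_univ := ⟨fun _ => isOpen_univ, fun _ => isOpen_univ⟩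
  isOpen_inter := fun A B hA hB =>
    ⟨fun x => (hA.1 x).inter (hB.1 x), fun y => (hA.2 y).inter (hB.2 y)⟩
  isOpen_sUnion := fun S hS => by
    constructor
    · intro x
      have h : {y : ℝ | (x, y) ∈ ⋃₀ S} = ⋃ G ∈ S, {y : ℝ | (x, y) ∈ G} := by
        ext y; simp
      rw [h]
      exact isOpen_biUnion fun G hG => (hS G hG).1 x
    · intro y
      have h : {x : ℝ | (x, y) ∈ ⋃₀ S} = ⋃ G ∈ S, {x : ℝ | (x, y) ∈ G} := by
        ext x; simp
      rw [h]
      exact isOpen_biUnion fun G hG => (hS G hG).2 y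

/-!
Well-order the index type so that every initial segment has fewer than `𝔠` elements, and
choose recursively `p i ∉ F i` whose two coordinates differ from those of all earlier points.
This is possible because a `γ`-nowhere dense set cannot contain `Uᶜ ×ˢ Vᶜ` for `#U, #V < 𝔠`:
that set is `γ`-dense, since inside a `γ`-open set one can first move horizontally off `U`
and then vertically off `V`. The chosen points meet every horizontal and vertical line at
most once, so they form a `γ`-closed set with empty `γ`-interior, contained in no `F i`.
-/

open Cardinal

section Recursion

universe u

variable {ι X : Type u} {r : ι → ι → Prop}

theorem WellFounded.exists_forall_rel_of_mk_lt (hr : WellFounded r) {κ : Cardinal.{u}}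
    (hsmall : ∀ i, #{ j // r j i } < κ) (R : X → X → Prop) (P : ι → X → Prop)
    (hP : ∀ i (S : Set X), #S < κ → ∃ x, P i x ∧ ∀ s ∈ S, R s x) :
    ∃ f : ι → X, ∀ i, P i (f i) ∧ ∀ j, r j i → R (f j) (f i) := by
  choose g hgP hgR using hP
  let step : ∀ i, (∀ j, r j i → X) → X := fun i prev =>
    g i (range fun j : { j // r j i } => prev j.1 j.2) (mk_range_le.trans_lt (hsmall i))
  refine ⟨hr.fix step, fun i => ?_⟩
  rw [hr.fix_eq step i]
  exact ⟨hgP .., fun j hj => hgR _ _ _ _ ⟨⟨j, hj⟩, rfl⟩⟩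

end Recursion

theorem IsOpen.exists_mem_notMem_of_mk_lt_continuum {E : Type*} [NormedAddCommGroup E]
    [NormedSpace ℝ E] [Nontrivial E] {O : Set E} (hO : IsOpen O) (hne : O.Nonempty)
    {S : Set E} (hS : #S < 𝔠) : ∃ x ∈ O, x ∉ S := by
  by_contra! h
  exact (continuum_le_cardinal_of_isOpen ℝ hO hne |>.trans (mk_le_mk_of_subset h)).not_gt hS

theorem IsNowhereDense.not_subset_of_dense {X : Type*} [TopologicalSpace X] [Nonempty X]
    {s t : Set X} (hs : IsNowhereDense s) (ht : Dense t) : ¬ t ⊆ s := fun hts => by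
  have : interior (closure s) = Set.univ := by rw [(ht.mono hts).closure_eq, interior_univ]
  exact Set.univ_nonempty.ne_empty (this.symm.trans hs)

namespace CrossTopology

theorem isOpen_iff {G : Set (ℝ × ℝ)} :
    IsOpen[crossTopology] G ↔
      (∀ x : ℝ, IsOpen {y : ℝ | (x, y) ∈ G}) ∧ (∀ y : ℝ, IsOpen {x : ℝ | (x, y) ∈ G}) :=
  Iff.rfl

theorem dense_compl_prod_compl {U V : Set ℝ} (hU : #U < 𝔠) (hV : #V < 𝔠) :
    @Dense _ crossTopology (Uᶜ ×ˢ Vᶜ) := by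
  let := crossTopology
  refine dense_iff_inter_open.2 fun G hG ⟨⟨x, y⟩, hxy⟩ => ?_
  obtain ⟨x', hx'G, hx'U⟩ := (isOpen_iff.1 hG).2 y |>.exists_mem_notMem_of_mk_lt_continuum
    ⟨x, hxy⟩ hU
  obtain ⟨y', hy'G, hy'V⟩ := (isOpen_iff.1 hG).1 x' |>.exists_mem_notMem_of_mk_lt_continuum
    ⟨y, hx'G⟩ hV
  exact ⟨(x', y'), hy'G, hx'U, hy'V⟩

theorem IsNowhereDense.exists_notMem_of_mk_lt {F : Set (ℝ × ℝ)}
    (hF : @IsNowhereDense _ crossTopology F) {S : Set (ℝ × ℝ)} (hS : #S < 𝔠) :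
    ∃ p, p ∉ F ∧ ∀ q ∈ S, q.1 ≠ p.1 ∧ q.2 ≠ p.2 := by
  let := crossTopology
  have hdense := dense_compl_prod_compl (U := Prod.fst '' S) (V := Prod.snd '' S)
    (mk_image_le.trans_lt hS) (mk_image_le.trans_lt hS)
  obtain ⟨p, hp, hpF⟩ := not_subset.1 (hF.not_subset_of_dense hdense)
  exact ⟨p, hpF, fun q hq => ⟨fun h => hp.1 ⟨q, hq, h⟩, fun h => hp.2 ⟨q, hq, h⟩⟩⟩

theorem isClosed_of_isClosed_sections {N : Set (ℝ × ℝ)}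
    (hv : ∀ x : ℝ, IsClosed {y : ℝ | (x, y) ∈ N})
    (hh : ∀ y : ℝ, IsClosed {x : ℝ | (x, y) ∈ N}) : IsClosed[crossTopology] N :=
  @isOpen_compl_iff _ _ crossTopology |>.1 ⟨fun x => (hv x).isOpen_compl,
    fun y => (hh y).isOpen_compl⟩

theorem interior_eq_empty_of_interior_sections {N : Set (ℝ × ℝ)}
    (hv : ∀ x : ℝ, interior {y : ℝ | (x, y) ∈ N} = ∅) : @interior _ crossTopology N = ∅ := by
  let := crossTopology
  refine eq_empty_of_forall_notMem fun ⟨x, y⟩ hxy => ?_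
  have hsub : {y : ℝ | (x, y) ∈ interior N} ⊆ interior {y : ℝ | (x, y) ∈ N} :=
    interior_maximal (fun _ h => interior_subset (s := N) h) ((isOpen_iff.1 isOpen_interior).1 x)
  simpa [hv x] using hsub hxy

theorem isNowhereDense_of_subsingleton_sections {N : Set (ℝ × ℝ)}
    (hv : ∀ x : ℝ, {y : ℝ | (x, y) ∈ N}.Subsingleton)
    (hh : ∀ y : ℝ, {x : ℝ | (x, y) ∈ N}.Subsingleton) :
    @IsNowhereDense _ crossTopology N := by
  let := crossTopology
  rw [(isClosed_of_isClosed_sections (fun x => (hv x).isClosed)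
    fun y => (hh y).isClosed).isNowhereDense_iff]
  exact interior_eq_empty_of_interior_sections fun x =>
    interior_eq_empty_iff_dense_compl.2 ((hv x).finite.countable.dense_compl ℝ)

end CrossTopology

/-- The cofinality of the ideal of nowhere dense subsets of `(ℝ × ℝ, γ)` exceeds
`2 ^ ℵ₀`: for every family of at most continuum many `γ`-nowhere dense sets there is a
`γ`-nowhere dense set contained in no member of the family. -/
theorem cof_nwd_cross_gt_continuum {ι : Type} (F : ι → Set (ℝ × ℝ))
    (hι : Cardinal.mk ι ≤ 2 ^ Cardinal.aleph0)
    (hF : ∀ i, @IsNowhereDense (ℝ × ℝ) crossTopology (F i)) :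
    ∃ N : Set (ℝ × ℝ), @IsNowhereDense (ℝ × ℝ) crossTopology N ∧ ∀ i, ¬ N ⊆ F i := by
  obtain ⟨r, _, hr⟩ := exists_ord_eq ι
  have hsmall (i : ι) : #{ j // r j i } < 𝔠 :=
    (card_typein_lt i hr).trans_le (two_power_aleph0 ▸ hι)
  obtain ⟨f, hf⟩ := IsWellFounded.wf.exists_forall_rel_of_mk_lt hsmall
    (fun q p : ℝ × ℝ => q.1 ≠ p.1 ∧ q.2 ≠ p.2) (fun i p => p ∉ F i)
    fun i _ hS => CrossTopology.IsNowhereDense.exists_notMem_of_mk_lt (hF i) hS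
  have hcoord (i j : ι) (h : (f i).1 = (f j).1 ∨ (f i).2 = (f j).2) : i = j := by
    rcases trichotomous_of r i j with hij | hij | hij
    · have hne := (hf j).2 i hij
      exact (h.elim hne.1 hne.2).elim
    · exact hij
    · have hne := (hf i).2 j hij
      exact (h.elim (hne.1 ∘ Eq.symm) (hne.2 ∘ Eq.symm)).elim
  refine ⟨range f, CrossTopology.isNowhereDense_of_subsingleton_sections ?_ ?_,
    fun i hsub => (hf i).1 (hsub (mem_range_self i))⟩
  · rintro x _ ⟨i, hi⟩ _ ⟨j, hj⟩
    obtain rfl := hcoord i j (.inl (by rw [hi, hj]))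
    exact (Prod.ext_iff.1 (hi.symm.trans hj)).2
  · rintro y _ ⟨i, hi⟩ _ ⟨j, hj⟩
    obtain rfl := hcoord i j (.inr (by rw [hi, hj]))
    exact (Prod.ext_iff.1 (hi.symm.trans hj)).1
end

section
/- Let γ be the cross topology on ℝ × ℝ. Then cof(M_γ) > 2^ℵ₀, i.e., for every family {F_α : α < 2^ℵ₀} of γ-meager subsets of ℝ × ℝ there exists a γ-meager set contained in no F_α. -/
/-!
Enumerate the family as `(F α)_{α < κ}` along the initial well-order of `ι`, so that every
initial segment has fewer than `𝔠` elements. By transfinite recursion pick `p α ∉ F α` whose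
abscissa and ordinate differ from those of all earlier points. This is possible because, as in
the Kuratowski–Ulam theorem, all vertical sections of a `γ`-meagre set outside a meagre set of
abscissas are meagre, and a comeagre subset of `ℝ` has cardinality `𝔠`. The set `{p α}` meets
each horizontal and each vertical line at most once, so it is `γ`-closed with empty
`γ`-interior: a `γ`-meagre set contained in no `F α`.
-/

open Topology Set

open Cardinal Function

universe u

theorem mk_le_mk_mul_mk_of_mem_residual {G : Type*} [AddGroup G] [TopologicalSpace G]
    [IsTopologicalAddGroup G] [BaireSpace G] {s : Set G} (hs : s ∈ residual G) :
    #G ≤ #s * #s := by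
  have hsurj : Surjective fun p : s × s => (p.1 : G) - p.2 := by
    intro t
    have hts : Homeomorph.addLeft t ⁻¹' s ∈ residual G := by
      rw [← (Homeomorph.addLeft t).residual_map_eq] at hs
      exact hs
    obtain ⟨x, hxs, hxts⟩ := (dense_of_mem_residual (Filter.inter_mem hs hts)).nonempty
    exact ⟨(⟨t + x, hxts⟩, ⟨x, hxs⟩), add_sub_cancel_right t x⟩
  simpa using mk_le_of_surjective hsurj

theorem continuum_le_mk_of_mem_residual {s : Set ℝ} (hs : s ∈ residual ℝ) : 𝔠 ≤ #s := by
  by_contra! h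
  have h𝔠 := mk_le_mk_mul_mk_of_mem_residual hs
  rw [mk_real] at h𝔠
  exact (mul_lt_of_lt aleph0_le_continuum h h).not_ge h𝔠

theorem exists_notMem_of_isMeagre_of_mk_lt {D A : Set ℝ} (hD : IsMeagre D) (hA : #A < 𝔠) :
    ∃ x, x ∉ D ∧ x ∉ A := by
  by_contra! h
  exact hA.not_ge ((continuum_le_mk_of_mem_residual hD).trans (mk_le_mk_of_subset h))

theorem exists_forall_mem_injective_fst_injective_snd {κ X Y : Type u} [LinearOrder κ]
    [WellFoundedLT κ] {c : Cardinal.{u}} (hκ : ∀ w : κ, #(Iio w) < c)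
    {S : κ → Set (X × Y)}
    (hS : ∀ w (A : Set X) (B : Set Y), #A < c → #B < c →
      ∃ p ∈ S w, p.1 ∉ A ∧ p.2 ∉ B) :
    ∃ P : κ → X × Y, (∀ w, P w ∈ S w) ∧ Injective (Prod.fst ∘ P) ∧
      Injective (Prod.snd ∘ P) := by
  have hrange {Z : Type u} (w : κ) (f : Iio w → Z) : #(range f) < c :=
    mk_range_le.trans_lt (hκ w)
  let P : κ → X × Y := wellFounded_lt.fix fun w ih =>
    (hS w (range fun v : Iio w => (ih v v.2).1) (range fun v : Iio w => (ih v v.2).2)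
      (hrange w _) (hrange w _)).choose
  have hP (w : κ) : P w ∈ S w ∧ (P w).1 ∉ range (fun v : Iio w => (P v).1) ∧
      (P w).2 ∉ range (fun v : Iio w => (P v).2) := by
    rw [show P w = _ from wellFounded_lt.fix_eq _ w]
    exact (hS w _ _ (hrange w _) (hrange w _)).choose_spec
  exact ⟨P, fun w => (hP w).1,
    Injective.of_lt_imp_ne fun v w hvw h => (hP w).2.1 ⟨⟨v, hvw⟩, h⟩,
    Injective.of_lt_imp_ne fun v w hvw h => (hP w).2.2 ⟨⟨v, hvw⟩, h⟩⟩

lemma crossTopology_le_prod : crossTopology ≤ instTopologicalSpaceProd := fun _ hU =>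
  ⟨fun x => hU.preimage (Continuous.prodMk_right x),
    fun y => hU.preimage (Continuous.prodMk_left y)⟩

lemma isClosed_crossTopology_iff {C : Set (ℝ × ℝ)} :
    IsClosed[crossTopology] C ↔
      (∀ x, IsClosed {y | (x, y) ∈ C}) ∧ ∀ y, IsClosed {x | (x, y) ∈ C} := by
  rw [← @isOpen_compl_iff _ C crossTopology]
  simp only [← isOpen_compl_iff]
  rfl

lemma isClosed_setOf_forall_mem_section {C : Set (ℝ × ℝ)} (hC : IsClosed[crossTopology] C)
    (I : Set ℝ) : IsClosed {x | ∀ y ∈ I, (x, y) ∈ C} := by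
  simpa only [ofPred_forall] using
    isClosed_biInter fun y _ => (isClosed_crossTopology_iff.1 hC).2 y

lemma interior_setOf_forall_mem_section_eq_empty {C : Set (ℝ × ℝ)}
    (hC : @interior _ crossTopology C = ∅) {I : Set ℝ} (hI : IsOpen I) (hI' : I.Nonempty) :
    interior {x | ∀ y ∈ I, (x, y) ∈ C} = ∅ := by
  have hsub : interior {x | ∀ y ∈ I, (x, y) ∈ C} ×ˢ I ⊆ @interior _ crossTopology C :=
    @interior_maximal _ crossTopology _ _ (fun p hp => interior_subset hp.1 p.2 hp.2)
      (crossTopology_le_prod _ (isOpen_interior.prod hI))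
  rw [hC, subset_empty_iff, prod_eq_empty_iff] at hsub
  exact hsub.resolve_right hI'.ne_empty

lemma isMeagre_setOf_not_isNowhereDense_section {t : Set (ℝ × ℝ)}
    (ht : @IsNowhereDense _ crossTopology t) :
    IsMeagre {x | ¬ IsNowhereDense {y | (x, y) ∈ t}} := by
  have hC : IsClosed[crossTopology] (closure[crossTopology] t) :=
    @isClosed_closure _ crossTopology t
  -- If the section of `t` at `x` is somewhere dense, the section of its `γ`-closure contains
  -- a basic open set `U`; for fixed `U` these `x` form a closed set with empty interior.
  refine (isMeagre_biUnion (TopologicalSpace.countable_countableBasis ℝ) fun U hU =>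
    ((isClosed_setOf_forall_mem_section hC U).isNowhereDense_iff.2
      (interior_setOf_forall_mem_section_eq_empty ht
        (TopologicalSpace.isOpen_of_mem_countableBasis hU)
        (TopologicalSpace.nonempty_of_mem_countableBasis hU))).isMeagre).mono ?_
  intro x hx
  have hsub : {y | (x, y) ∈ t} ⊆ {y | (x, y) ∈ closure[crossTopology] t} :=
    fun y hy => @subset_closure _ crossTopology t _ hy
  obtain ⟨y, hy⟩ : (interior {y | (x, y) ∈ closure[crossTopology] t}).Nonempty := by
    refine nonempty_iff_ne_empty.2 fun h => hx ?_
    exact (((isClosed_crossTopology_iff.1 hC).1 x).isNowhereDense_iff.2 h).mono hsub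
  obtain ⟨U, hU, -, hUsub⟩ :=
    (TopologicalSpace.isBasis_countableBasis ℝ).exists_subset_of_mem_open hy isOpen_interior
  exact mem_biUnion hU fun y' hy' =>
    (interior_subset (hUsub hy') : y' ∈ {y | (x, y) ∈ closure[crossTopology] t})

lemma isMeagre_setOf_not_isMeagre_section {F : Set (ℝ × ℝ)}
    (hF : @IsMeagre _ crossTopology F) : IsMeagre {x | ¬ IsMeagre {y | (x, y) ∈ F}} := by
  obtain ⟨S, hS, hScount, hFS⟩ :=
    (@isMeagre_iff_countable_union_isNowhereDense _ crossTopology F).1 hF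
  refine (isMeagre_biUnion hScount fun t ht =>
    isMeagre_setOf_not_isNowhereDense_section (hS t ht)).mono fun x hx => ?_
  by_contra hx'
  simp only [mem_iUnion, mem_ofPred_eq, not_exists, not_not] at hx'
  refine hx ((isMeagre_biUnion hScount fun t ht => (hx' t ht).isMeagre).mono fun y hy => ?_)
  simpa using hFS hy

theorem exists_notMem_of_isMeagre_crossTopology {F : Set (ℝ × ℝ)}
    (hF : @IsMeagre _ crossTopology F) {A B : Set ℝ} (hA : #A < 𝔠) (hB : #B < 𝔠) :
    ∃ p ∉ F, p.1 ∉ A ∧ p.2 ∉ B := by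
  obtain ⟨x, hx, hxA⟩ :=
    exists_notMem_of_isMeagre_of_mk_lt (isMeagre_setOf_not_isMeagre_section hF) hA
  obtain ⟨y, hy, hyB⟩ := exists_notMem_of_isMeagre_of_mk_lt (not_not.1 hx) hB
  exact ⟨(x, y), hy, hxA, hyB⟩

lemma isNowhereDense_crossTopology_of_subsingleton_sections {N : Set (ℝ × ℝ)}
    (hv : ∀ x, {y | (x, y) ∈ N}.Subsingleton) (hh : ∀ y, {x | (x, y) ∈ N}.Subsingleton) :
    @IsNowhereDense _ crossTopology N := by
  have hN : IsClosed[crossTopology] N :=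
    isClosed_crossTopology_iff.2 ⟨fun x => (hv x).isClosed, fun y => (hh y).isClosed⟩
  rw [@IsClosed.isNowhereDense_iff _ crossTopology _ hN, eq_empty_iff_forall_notMem]
  rintro ⟨x, y⟩ hxy
  have hempty : interior {y' | (x, y') ∈ N} = ∅ :=
    interior_eq_empty_iff_dense_compl.2 ((hv x).countable.dense_compl ℝ)
  have hsub : {y' | (x, y') ∈ @interior _ crossTopology N} ⊆ interior {y' | (x, y') ∈ N} :=
    interior_maximal (fun y' hy' => @interior_subset _ crossTopology N _ hy')
      ((@isOpen_interior _ crossTopology N).1 x)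
  exact (hempty ▸ hsub) hxy

lemma isNowhereDense_crossTopology_range {κ : Type*} {P : κ → ℝ × ℝ}
    (h₁ : Injective (Prod.fst ∘ P)) (h₂ : Injective (Prod.snd ∘ P)) :
    @IsNowhereDense _ crossTopology (range P) := by
  refine isNowhereDense_crossTopology_of_subsingleton_sections ?_ ?_
  · rintro x _ ⟨v, hv⟩ _ ⟨w, hw⟩
    obtain rfl : v = w := h₁ (by simp [hv, hw])
    exact congrArg Prod.snd (hv.symm.trans hw)
  · rintro y _ ⟨v, hv⟩ _ ⟨w, hw⟩
    obtain rfl : v = w := h₂ (by simp [hv, hw])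
    exact congrArg Prod.fst (hv.symm.trans hw)

/-- The cofinality of the ideal of meager subsets of `(ℝ × ℝ, γ)` exceeds `2 ^ ℵ₀`:
for every family of at most continuum many `γ`-meager sets there is a `γ`-meager set
contained in no member of the family. -/
theorem cof_meagre_cross_gt_continuum {ι : Type} (F : ι → Set (ℝ × ℝ))
    (hι : Cardinal.mk ι ≤ 2 ^ Cardinal.aleph0)
    (hF : ∀ i, @IsMeagre (ℝ × ℝ) crossTopology (F i)) :
    ∃ N : Set (ℝ × ℝ), @IsMeagre (ℝ × ℝ) crossTopology N ∧ ∀ i, ¬ N ⊆ F i := by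
  rw [two_power_aleph0] at hι
  obtain ⟨e⟩ : Nonempty (ι ≃ (#ι).ord.ToType) := Cardinal.eq.1 (mk_ord_toType _).symm
  have hκ (w : (#ι).ord.ToType) : #(Iio w) < 𝔠 :=
    (mk_Iio_lt w (by simp)).trans_le ((mk_ord_toType _).trans_le hι)
  obtain ⟨P, hPF, h₁, h₂⟩ := exists_forall_mem_injective_fst_injective_snd hκ
    (S := fun w => (F (e.symm w))ᶜ)
    fun w _ _ hA hB => exists_notMem_of_isMeagre_crossTopology (hF _) hA hB
  refine ⟨range P,
    @IsNowhereDense.isMeagre _ crossTopology _ (isNowhereDense_crossTopology_range h₁ h₂),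
    fun i hi => hPF (e i) ?_⟩
  simpa using hi (mem_range_self (e i))
end

section
/- The graph {(x, f(x)) : x ∈ ℝ} of any injective function f : ℝ → ℝ is nowhere dense in the cross topology γ on ℝ × ℝ. -/
/-!
The graph is `γ`-closed: its vertical sections are the singletons `{f x}`, and by injectivity its
horizontal sections are subsingletons. Each map `y ↦ (x, y)` is continuous from `ℝ` into `γ`, so
a `γ`-open set inside the graph would pull back to an open subset of a singleton, hence be empty.
-/

open Topology Set

namespace crossTopology

theorem isClosed_iff {S : Set (ℝ × ℝ)} :
    IsClosed[crossTopology] S ↔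
      (∀ x : ℝ, IsClosed (Prod.mk x ⁻¹' S)) ∧ ∀ y : ℝ, IsClosed ((·, y) ⁻¹' S) := by
  let _ := crossTopology
  simp only [← isOpen_compl_iff, ← preimage_compl]
  rfl

theorem continuous_prodMk_left (x : ℝ) : Continuous[_, crossTopology] (Prod.mk x) := by
  let _ := crossTopology
  exact ⟨fun _ hU => hU.1 x⟩

end crossTopology

/-- The graph of any injective function `f : ℝ → ℝ` is nowhere dense in the cross
topology `γ` on `ℝ × ℝ`. -/
theorem graph_injective_nowhereDense_cross (f : ℝ → ℝ) (hf : Function.Injective f) :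
    @IsNowhereDense (ℝ × ℝ) crossTopology {p : ℝ × ℝ | p.2 = f p.1} := by
  let _ := crossTopology
  have hvertical (x : ℝ) : Prod.mk x ⁻¹' {p : ℝ × ℝ | p.2 = f p.1} = {f x} := rfl
  have hclosed : IsClosed {p : ℝ × ℝ | p.2 = f p.1} :=
    crossTopology.isClosed_iff.2
      ⟨fun x => hvertical x ▸ isClosed_singleton,
        fun y => Set.Subsingleton.isClosed fun a ha b hb => hf (ha.symm.trans hb)⟩
  rw [IsNowhereDense, hclosed.closure_eq, eq_empty_iff_forall_notMem]
  rintro ⟨x, y⟩ hxy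
  have hy := preimage_interior_subset_interior_preimage (crossTopology.continuous_prodMk_left x) hxy
  rwa [hvertical, interior_singleton] at hy
end

section
/- If X is a nonempty Hausdorff topological space that is dense in itself (has no isolated points), then cof(nwd_X) ≥ ℵ₁; that is, for every countable family F₀, F₁, F₂, … of nowhere dense subsets of X there exists a nowhere dense subset of X contained in no Fₙ. -/
/-!
Recursively choose points `xₙ ∉ Fₙ` and a decreasing sequence of nonempty open sets `Uₙ`
with `xₙ ∈ Uₙ \ closure Uₙ₊₁`: at stage `n`, the set `Uₙ \ closure Fₙ` is nonempty and open,
hence has two points, which the Hausdorff property separates. The open set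
`Uₖ \ closure Uₖ₊₁` then meets `{xₙ}` only in `xₖ`, so `{xₙ}` is a discrete set, and a discrete
set in a T₁ space without isolated points is nowhere dense.
-/

open Set

section

variable {X : Type*} [TopologicalSpace X]

theorem IsOpen.nontrivial_of_not_isOpen_singleton (hX : ∀ x : X, ¬IsOpen ({x} : Set X))
    {U : Set X} (hU : IsOpen U) (hne : U.Nonempty) : U.Nontrivial := by
  obtain ⟨x, hx⟩ := hne
  by_contra hU'
  rw [not_nontrivial_iff] at hU'
  exact hX x (hU'.eq_singleton_of_mem hx ▸ hU)

theorem IsOpen.exists_open_subset_notMem_closure [T2Space X] {U : Set X} (hU : IsOpen U)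
    (hU' : U.Nontrivial) : ∃ x ∈ U, ∃ V ⊆ U, IsOpen V ∧ V.Nonempty ∧ x ∉ closure V := by
  obtain ⟨x, hx, y, hy, hxy⟩ := hU'
  obtain ⟨A, B, hA, hB, hxA, hyB, hAB⟩ := t2_separation hxy
  refine ⟨x, hx, U ∩ B, inter_subset_left, hU.inter hB, ⟨y, hy, hyB⟩, fun hxB => ?_⟩
  exact (hAB.closure_right hA).notMem_of_mem_left hxA (closure_mono inter_subset_right hxB)

theorem IsNowhereDense.diff_closure_nonempty {F U : Set X} (hF : IsNowhereDense F)
    (hU : IsOpen U) (hne : U.Nonempty) : (U \ closure F).Nonempty :=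
  (interior_eq_empty_iff_dense_compl.mp hF).inter_open_nonempty U hU hne

theorem IsNowhereDense.exists_open_subset_notMem_closure [T2Space X]
    (hX : ∀ x : X, ¬IsOpen ({x} : Set X)) {F U : Set X} (hF : IsNowhereDense F)
    (hU : IsOpen U) (hne : U.Nonempty) :
    ∃ x ∈ U \ F, ∃ V ⊆ U, IsOpen V ∧ V.Nonempty ∧ x ∉ closure V := by
  have hW : IsOpen (U \ closure F) := hU.sdiff isClosed_closure
  obtain ⟨x, ⟨hxU, hxF⟩, V, hVW, hV, hVne, hxV⟩ :=
    hW.exists_open_subset_notMem_closure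
      (hW.nontrivial_of_not_isOpen_singleton hX (hF.diff_closure_nonempty hU hne))
  exact ⟨x, ⟨hxU, fun h => hxF (subset_closure h)⟩, V, hVW.trans sdiff_subset, hV, hVne, hxV⟩

theorem exists_seq_notMem_of_isNowhereDense [T2Space X] [Nonempty X] (hX : ∀ x : X, ¬IsOpen ({x} : Set X))
    {F : ℕ → Set X} (hF : ∀ n, IsNowhereDense (F n)) :
    ∃ (x : ℕ → X) (U : ℕ → Set X), Antitone U ∧ (∀ n, IsOpen (U n)) ∧
      ∀ n, x n ∈ U n \ closure (U (n + 1)) ∧ x n ∉ F n := by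
  have step (n : ℕ) (U : {U : Set X // IsOpen U ∧ U.Nonempty}) :
      ∃ x ∈ U.1 \ F n, ∃ V : {V : Set X // IsOpen V ∧ V.Nonempty},
        V.1 ⊆ U.1 ∧ x ∉ closure V.1 := by
    obtain ⟨x, hx, V, hVU, hV, hVne, hxV⟩ :=
      (hF n).exists_open_subset_notMem_closure hX U.2.1 U.2.2
    exact ⟨x, hx, ⟨V, hV, hVne⟩, hVU, hxV⟩
  choose x hx V hVU hxV using step
  let U : ℕ → {U : Set X // IsOpen U ∧ U.Nonempty} :=
    fun n => Nat.rec ⟨univ, isOpen_univ, univ_nonempty⟩ (fun n U => V n U) n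
  refine ⟨fun n => x n (U n), fun n => (U n).1, antitone_nat_of_succ_le fun n => hVU n (U n),
    fun n => (U n).2.1, fun n => ⟨⟨(hx n (U n)).1, hxV n (U n)⟩, (hx n (U n)).2⟩⟩

theorem inter_range_subset_singleton_of_antitone {x : ℕ → X} {U : ℕ → Set X} (hU : Antitone U)
    (hx : ∀ n, x n ∈ U n \ closure (U (n + 1))) (k : ℕ) :
    (U k \ closure (U (k + 1))) ∩ range x ⊆ {x k} := by
  rintro _ ⟨⟨hk, hk'⟩, m, rfl⟩
  rcases lt_trichotomy m k with hmk | rfl | hkm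
  · exact absurd (subset_closure (hU hmk hk)) (hx m).2
  · rfl
  · exact absurd (subset_closure (hU hkm (hx m).1)) hk'

theorem isNowhereDense_of_forall_isOpen_inter_subset_singleton [T1Space X]
    (hX : ∀ x : X, ¬IsOpen ({x} : Set X)) {S : Set X}
    (hS : ∀ s ∈ S, ∃ O, IsOpen O ∧ s ∈ O ∧ O ∩ S ⊆ {s}) : IsNowhereDense S := by
  refine isNowhereDense_iff_disjoint.mpr (disjoint_left.mpr fun s hs hsS => ?_)
  obtain ⟨O, hO, hsO, hOS⟩ := hS s hs
  have hW : O ∩ interior (closure S) ⊆ {s} :=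
    calc O ∩ interior (closure S) ⊆ O ∩ closure S := inter_subset_inter_right O interior_subset
      _ ⊆ closure (O ∩ S) := hO.inter_closure
      _ ⊆ {s} := closure_minimal hOS isClosed_singleton
  have hW' : O ∩ interior (closure S) = {s} :=
    hW.antisymm (singleton_subset_iff.mpr ⟨hsO, hsS⟩)
  exact hX s (hW' ▸ hO.inter isOpen_interior)

end

/-- If `X` is a nonempty Hausdorff space which is dense in itself (no point is
isolated), then `cof(nwd_X) ≥ ℵ₁`: for every countable family `F₀, F₁, …` of nowhere
dense subsets of `X` there is a nowhere dense subset of `X` contained in no `Fₙ`. -/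
theorem cof_nwd_ge_aleph_one {X : Type*} [TopologicalSpace X] [T2Space X] [Nonempty X]
    (hdii : ∀ x : X, ¬ IsOpen ({x} : Set X))
    (F : ℕ → Set X) (hF : ∀ n, IsNowhereDense (F n)) :
    ∃ N : Set X, IsNowhereDense N ∧ ∀ n, ¬ N ⊆ F n := by
  obtain ⟨x, U, hU, hUo, hx⟩ := exists_seq_notMem_of_isNowhereDense hdii hF
  refine ⟨range x, ?_, fun n hN => (hx n).2 (hN ⟨n, rfl⟩)⟩
  refine isNowhereDense_of_forall_isOpen_inter_subset_singleton hdii ?_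
  rintro _ ⟨k, rfl⟩
  exact ⟨U k \ closure (U (k + 1)), (hUo k).sdiff isClosed_closure, (hx k).1,
    inter_range_subset_singleton_of_antitone hU (fun n => (hx n).1) k⟩
end

section
/- Let X be a dense in itself metric space and let Q be a dense subset of X. Then for each nowhere dense subset F of X there exists a set G ⊆ Q that is nowhere dense in the subspace Q and satisfies F ⊆ cl_X G, where cl_X G is the closure of G in X. -/
open Topology Set Metric Filter

/-!
For `εₙ = 1/(n+1)` pick a maximal `εₙ`-separated set `Sₙ` of points of `Q` lying within `εₙ`
of `F`. Density of `Q` puts every point of `F` within `2εₙ` of `Sₙ`, so `F ⊆ cl (⋃ Sₙ)`.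
Each `Sₙ` is closed and discrete, hence nowhere dense as `X` has no isolated points, and near a
point off `cl F` only finitely many `Sₙ` appear, so `⋃ Sₙ` is nowhere dense; since `Q` is dense,
its trace on `Q` is nowhere dense in `Q`.
-/

section Topological

variable {X : Type*} [TopologicalSpace X]

lemma IsNowhereDense.union {s t : Set X} (hs : IsNowhereDense s) (ht : IsNowhereDense t) :
    IsNowhereDense (s ∪ t) := by
  rw [IsNowhereDense, closure_union, interior_union_isClosed_of_interior_empty isClosed_closure ht,
    hs]

lemma isNowhereDense_biUnion_finset {ι : Type*} (I : Finset ι) {f : ι → Set X}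
    (hf : ∀ i ∈ I, IsNowhereDense (f i)) : IsNowhereDense (⋃ i ∈ I, f i) := by
  classical
  induction I using Finset.induction_on with
  | empty => simp
  | insert i I _ ih =>
    rw [Finset.set_biUnion_insert]
    exact (hf i (Finset.mem_insert_self i I)).union
      (ih fun j hj => hf j (Finset.mem_insert_of_mem hj))

lemma IsNowhereDense.of_forall_notMem_closure {F s : Set X} (hF : IsNowhereDense F)
    (h : ∀ x ∉ closure F, ∃ V ∈ 𝓝 x, IsNowhereDense (s ∩ V)) : IsNowhereDense s := by
  have hsF : interior (closure s) ⊆ closure F := by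
    intro x hx
    by_contra hxF
    obtain ⟨V, hV, hsV⟩ := h x hxF
    obtain ⟨W, hWV, hW, hxW⟩ := mem_nhds_iff.1 hV
    have hWs : W ∩ interior (closure s) ⊆ closure (s ∩ V) :=
      calc W ∩ interior (closure s) ⊆ W ∩ closure s := inter_subset_inter_right W interior_subset
        _ ⊆ closure (W ∩ s) := hW.inter_closure
        _ ⊆ closure (s ∩ V) := closure_mono fun y hy => ⟨hy.2, hWV hy.1⟩
    have hx' := interior_maximal hWs (hW.inter isOpen_interior) ⟨hxW, hx⟩
    rw [hsV] at hx'
    exact hx'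
  exact subset_empty_iff.1 (hF ▸ interior_maximal hsF isOpen_interior)

lemma IsNowhereDense.preimage_val_of_dense {Q t : Set X} (hQ : Dense Q) (ht : IsNowhereDense t) :
    IsNowhereDense (Subtype.val ⁻¹' t : Set Q) := by
  obtain ⟨hU, hUd⟩ := isClosed_isNowhereDense_iff_compl.1 ⟨isClosed_closure, ht.closure⟩
  have hclosed : IsClosed (Subtype.val ⁻¹' closure t : Set Q) :=
    isClosed_closure.preimage continuous_subtype_val
  have hdense : Dense (Subtype.val ⁻¹' closure t : Set Q)ᶜ := by
    rw [← preimage_compl, Subtype.dense_iff, Subtype.image_preimage_coe,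
      (hQ.inter_of_isOpen_right hUd hU).closure_eq]
    exact subset_univ Q
  exact (isClosed_isNowhereDense_iff_compl.2 ⟨hclosed.isOpen_compl, hdense⟩).2.mono
    (preimage_mono subset_closure)

end Topological

lemma isNowhereDense_of_pairwise_le_dist {X : Type*} [MetricSpace X]
    (hX : ∀ x : X, ¬ IsOpen ({x} : Set X)) {S : Set X} {ε : ℝ} (hε : 0 < ε)
    (hS : S.Pairwise fun x y => ε ≤ dist x y) : IsNowhereDense S := by
  refine (isClosed_of_pairwise_le_dist hε hS).isNowhereDense_iff.2
    (eq_empty_of_forall_notMem fun x hx => hX x ?_)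
  obtain ⟨r, hr, hrS⟩ := Metric.isOpen_iff.1 isOpen_interior x hx
  refine Metric.isOpen_singleton_iff.2 ⟨min r ε, lt_min hr hε, fun y hy => ?_⟩
  by_contra hyx
  have hyS : y ∈ S := interior_subset (hrS (mem_ball.2 (hy.trans_le (min_le_left r ε))))
  exact (hS hyS (interior_subset hx) hyx).not_gt (hy.trans_le (min_le_right r ε))

section PseudoMetric

variable {X : Type*} [PseudoMetricSpace X]

lemma exists_subset_pairwise_le_dist_forall_exists_dist_lt (A : Set X) {ε : ℝ} (hε : 0 < ε) :
    ∃ S ⊆ A, S.Pairwise (fun x y => ε ≤ dist x y) ∧ ∀ a ∈ A, ∃ s ∈ S, dist a s < ε := by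
  obtain ⟨S, hS⟩ := zorn_subset {S | S ⊆ A ∧ S.Pairwise fun x y => ε ≤ dist x y}
    fun c hc hchain => ⟨⋃₀ c, ⟨sUnion_subset fun s hs => (hc hs).1,
      hchain.pairwise_sUnion.2 fun s hs => (hc hs).2⟩, fun s hs => subset_sUnion_of_mem hs⟩
  refine ⟨S, hS.prop.1, hS.prop.2, fun a ha => ?_⟩
  by_contra! hfar
  have haS : a ∈ S := hS.mem_of_prop_insert ⟨insert_subset ha hS.prop.1,
    hS.prop.2.insert fun s hs _ => ⟨hfar s hs, dist_comm a s ▸ hfar s hs⟩⟩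
  exact (hfar a haS).not_gt (by simpa using hε)

lemma isNowhereDense_iUnion_of_subset_thickening {F : Set X} (hF : IsNowhereDense F)
    {S : ℕ → Set X} {ε : ℕ → ℝ} (hε : Tendsto ε atTop (𝓝 0))
    (hSF : ∀ n, S n ⊆ thickening (ε n) F) (hS : ∀ n, IsNowhereDense (S n)) :
    IsNowhereDense (⋃ n, S n) := by
  refine hF.of_forall_notMem_closure fun x hx => ?_
  obtain ⟨δ, hδ, hxδ⟩ := (disjoint_singleton_left.2 hx).exists_thickenings isCompact_singleton
    isClosed_closure
  rw [thickening_singleton, thickening_closure] at hxδ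
  obtain ⟨N, hN⟩ := eventually_atTop.1 ((tendsto_order.1 hε).2 δ hδ)
  refine ⟨ball x δ, ball_mem_nhds x hδ,
    (isNowhereDense_biUnion_finset (Finset.range N) fun n _ => hS n).mono ?_⟩
  rintro y ⟨hy, hyx⟩
  obtain ⟨n, hn⟩ := mem_iUnion.1 hy
  refine mem_iUnion₂.2 ⟨n, Finset.mem_range.2 ?_, hn⟩
  by_contra! hNn
  exact hxδ.ne_of_mem hyx (thickening_mono (hN n hNn).le F (hSF n hn)) rfl

end PseudoMetric

/-- If `X` is a dense in itself metric space and `Q` is a dense subset of `X`, then for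
every nowhere dense subset `F` of `X` there is a set `G ⊆ Q`, nowhere dense in the
subspace `Q`, whose closure in `X` contains `F`. -/
theorem nwd_subset_closure_of_dense {X : Type*} [MetricSpace X]
    (hdii : ∀ x : X, ¬ IsOpen ({x} : Set X))
    (Q : Set X) (hQ : Dense Q)
    (F : Set X) (hF : IsNowhereDense F) :
    ∃ G : Set Q, IsNowhereDense G ∧ F ⊆ closure (Subtype.val '' G) := by
  set ε : ℕ → ℝ := fun n => 1 / ((n : ℝ) + 1)
  have hε : ∀ n, 0 < ε n := fun n => Nat.one_div_pos_of_nat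
  choose S hSsub hSsep hScov using fun n =>
    exists_subset_pairwise_le_dist_forall_exists_dist_lt (Q ∩ thickening (ε n) F) (hε n)
  have hSQ : (⋃ n, S n) ⊆ Q := iUnion_subset fun n => (hSsub n).trans inter_subset_left
  have hFS : F ⊆ closure (⋃ n, S n) := by
    refine fun x hx => Metric.mem_closure_iff.2 fun r hr => ?_
    obtain ⟨n, hn⟩ := exists_nat_one_div_lt (half_pos hr)
    obtain ⟨q, hqQ, hqx⟩ := hQ.exists_mem_open isOpen_ball ⟨x, mem_ball_self (hε n)⟩
    obtain ⟨s, hs, hqs⟩ := hScov n q ⟨hqQ, mem_thickening_iff.2 ⟨x, hx, mem_ball.1 hqx⟩⟩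
    refine ⟨s, mem_iUnion.2 ⟨n, hs⟩, ?_⟩
    linarith [dist_triangle x q s, mem_ball'.1 hqx]
  have hSnd : IsNowhereDense (⋃ n, S n) :=
    isNowhereDense_iUnion_of_subset_thickening hF tendsto_one_div_add_atTop_nhds_zero_nat
      (fun n => (hSsub n).trans inter_subset_right)
      fun n => isNowhereDense_of_pairwise_le_dist hdii (hε n) (hSsep n)
  refine ⟨Subtype.val ⁻¹' ⋃ n, S n, hSnd.preimage_val_of_dense hQ, ?_⟩
  rwa [Subtype.image_preimage_coe, inter_eq_right.2 hSQ]
end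

section
/- Let λ be an infinite cardinal and let λ^ω denote the countable product of the discrete space of cardinality λ with the product topology. Then every subset of λ^ω of cardinality less than λ is nowhere dense, and non(nwd_{λ^ω}) = λ, i.e., λ is the least cardinality of a subset of λ^ω that is not nowhere dense. Moreover cof(nwd_{λ^ω}) > λ. -/
open Topology Set

universe u

/-- The cofinality of the ideal of nowhere dense subsets of `Z`: the least cardinality
of a family of nowhere dense sets such that every nowhere dense subset of `Z` is
contained in a member of the family. -/
noncomputable def cofNwd (Z : Type u) [TopologicalSpace Z] : Cardinal.{u} :=
  sInf {c : Cardinal.{u} | ∃ W : Set (Set Z), Cardinal.mk W = c ∧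
    (∀ s ∈ W, IsNowhereDense s) ∧
    ∀ F : Set Z, IsNowhereDense F → ∃ s ∈ W, F ⊆ s}

/-- The uniformity number of the ideal of nowhere dense subsets of `Z`: the least
cardinality of a subset of `Z` that is not nowhere dense. -/
noncomputable def nonNwd (Z : Type u) [TopologicalSpace Z] : Cardinal.{u} :=
  sInf {c : Cardinal.{u} | ∃ s : Set Z, Cardinal.mk s = c ∧ ¬ IsNowhereDense s}

/-! A basic open set of `ι → L` constrains only finitely many coordinates. A set of fewer than
`λ = #L` points misses some value `a i` in every coordinate `i`, so it lies in the closed set of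
sequences avoiding all the `a i`, which contains no basic open set; on the other hand the
eventually constant sequences form a dense set of size `λ`. For `cof > λ`, given nowhere dense
sets `w a` indexed by `a : L`, pick `p a ∉ closure (w a)` with `p a 0 = a`: the range of `p` is
closed (it is a retract via `x ↦ p (x 0)`) and meets each basic open set `{x | x 0 = a}` in one
point only, so it is nowhere dense but contained in no `w a`. -/

universe v

open Cardinal

theorem nonNwd_eq {Z : Type u} [TopologicalSpace Z] {c : Cardinal.{u}}
    (hsmall : ∀ s : Set Z, #s < c → IsNowhereDense s)
    (hwit : ∃ s : Set Z, #s ≤ c ∧ ¬ IsNowhereDense s) : nonNwd Z = c := by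
  obtain ⟨s, hsc, hs⟩ := hwit
  have hmem : #s ∈ {c : Cardinal.{u} | ∃ s : Set Z, #s = c ∧ ¬ IsNowhereDense s} :=
    ⟨s, rfl, hs⟩
  refine le_antisymm ((csInf_le' hmem).trans hsc) (le_csInf ⟨_, hmem⟩ ?_)
  rintro _ ⟨t, rfl, ht⟩
  exact not_lt.1 (mt (hsmall t) ht)

theorem lt_cofNwd {Z : Type u} [TopologicalSpace Z] {κ : Type u}
    (h : ∀ w : κ → Set Z, (∀ a, IsNowhereDense (w a)) →
      ∃ F, IsNowhereDense F ∧ ∀ a, ¬ F ⊆ w a) : #κ < cofNwd Z := by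
  obtain ⟨W, hW, hWnwd, hWcof⟩ := csInf_mem (s := {c : Cardinal.{u} |
      ∃ W : Set (Set Z), #W = c ∧ (∀ s ∈ W, IsNowhereDense s) ∧
        ∀ F : Set Z, IsNowhereDense F → ∃ s ∈ W, F ⊆ s})
    ⟨_, {t | IsNowhereDense t}, rfl, fun _ h => h, fun F hF => ⟨F, hF, subset_rfl⟩⟩
  rw [cofNwd, ← hW, lt_iff_not_ge]
  rintro ⟨e⟩
  have : Nonempty W := by
    obtain ⟨s, hs, -⟩ := hWcof ∅ isNowhereDense_empty
    exact ⟨⟨s, hs⟩⟩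
  obtain ⟨F, hF, hFw⟩ := h (fun a => ((Function.invFun (e : W → κ) a : W) : Set Z))
    fun a => hWnwd _ (Function.invFun (e : W → κ) a).2
  obtain ⟨s, hs, hFs⟩ := hWcof F hF
  refine hFw (e ⟨s, hs⟩) ?_
  rwa [Function.leftInverse_invFun e.injective]

theorem Dense.not_isNowhereDense {Z : Type*} [TopologicalSpace Z] [Nonempty Z] {s : Set Z}
    (hs : Dense s) : ¬ IsNowhereDense s := by
  rw [IsNowhereDense, hs.closure_eq, interior_univ]
  exact univ_nonempty.ne_empty

theorem IsNowhereDense.exists_mem_notMem_closure {Z : Type*} [TopologicalSpace Z] {s U : Set Z}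
    (hs : IsNowhereDense s) (hU : IsOpen U) (hUne : U.Nonempty) : ∃ x ∈ U, x ∉ closure s := by
  by_contra! h
  obtain ⟨x, hx⟩ := hUne
  exact (hs ▸ interior_maximal h hU hx : x ∈ (∅ : Set Z))

section Pi

variable {ι : Type*} {X : ι → Type*} [∀ i, TopologicalSpace (X i)]

theorem dense_pi_of_forall_finset {s : Set (∀ i, X i)}
    (h : ∀ (x : ∀ i, X i) (I : Finset ι), ∃ y ∈ s, ∀ i ∈ I, y i = x i) : Dense s := by
  refine dense_iff_inter_open.2 fun U hU ⟨x, hx⟩ => ?_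
  obtain ⟨I, u, hxu, hIU⟩ := isOpen_pi_iff.1 hU x hx
  obtain ⟨y, hys, hyx⟩ := h x I
  exact ⟨y, hIU fun i hi => hyx i hi ▸ (hxu i hi).2, hys⟩

theorem interior_eq_empty_pi_of_forall_finset {t : Set (∀ i, X i)}
    (h : ∀ (x : ∀ i, X i) (I : Finset ι), ∃ y ∉ t, ∀ i ∈ I, y i = x i) :
    interior t = ∅ :=
  interior_eq_empty_iff_dense_compl.2 (dense_pi_of_forall_finset h)

variable [Infinite ι] [∀ i, DiscreteTopology (X i)]

theorem isNowhereDense_setOf_forall_ne (a : ∀ i, X i) :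
    IsNowhereDense {f : ∀ i, X i | ∀ i, f i ≠ a i} := by
  classical
  have hclosed : IsClosed {f : ∀ i, X i | ∀ i, f i ≠ a i} :=
    ofPred_forall _ ▸ isClosed_iInter fun i =>
      (isClosed_discrete {a i}ᶜ).preimage (continuous_apply i)
  refine hclosed.isNowhereDense_iff.2 (interior_eq_empty_pi_of_forall_finset fun x I => ?_)
  obtain ⟨n, hn⟩ := Infinite.exists_notMem_finset I
  refine ⟨Function.update x n (a n), fun h => h n (by simp), fun i hi => ?_⟩
  exact Function.update_of_ne (by rintro rfl; exact hn hi) _ _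

theorem isNowhereDense_range_of_apply_eq [∀ i, Nontrivial (X i)] {i₀ : ι}
    {p : X i₀ → ∀ i, X i} (hp : ∀ a, p a i₀ = a) : IsNowhereDense (range p) := by
  classical
  have hclosed : IsClosed (range p) :=
    Function.LeftInverse.isClosed_range (f := fun x : ∀ i, X i => x i₀) hp
      (continuous_apply i₀) continuous_of_discreteTopology
  refine hclosed.isNowhereDense_iff.2 (interior_eq_empty_pi_of_forall_finset fun x I => ?_)
  obtain ⟨n, hn⟩ := Infinite.exists_notMem_finset (insert i₀ I)
  obtain ⟨c, hc⟩ := exists_ne (p (x i₀) n)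
  refine ⟨Function.update x n c, ?_, fun i hi => Function.update_of_ne ?_ _ _⟩
  · rintro ⟨b, hb⟩
    have hbx : b = x i₀ := by
      rw [← hp b, hb, Function.update_of_ne (by rintro rfl; simp at hn)]
    subst hbx
    exact hc (by rw [hb, Function.update_self])
  · rintro rfl
    simp [hi] at hn

end Pi

theorem isNowhereDense_of_mk_lt {ι : Type v} {L : Type u} [Infinite ι] [TopologicalSpace L]
    [DiscreteTopology L] {s : Set (ι → L)} (hs : #s < lift.{v} #L) : IsNowhereDense s := by
  have hmiss : ∀ i, ∃ a, a ∉ (fun f : ι → L => f i) '' s := fun i => by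
    by_contra! h
    have := mk_image_le_lift (f := fun f : ι → L => f i) (s := s)
    rw [eq_univ_of_forall h, mk_univ, lift_id'.{u, v}, lift_umax.{u, v}] at this
    exact (this.trans_lt hs).false
  choose a ha using hmiss
  exact (isNowhereDense_setOf_forall_ne a).mono fun f hf i hfi => ha i ⟨f, hf, hfi⟩

theorem exists_dense_mk_le (L : Type u) [TopologicalSpace L] [Infinite L] :
    ∃ D : Set (ℕ → L), Dense D ∧ #D ≤ #L := by
  obtain ⟨l₀⟩ : Nonempty L := inferInstance
  refine ⟨range fun l : List L => fun n => l.getD n l₀, ?_,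
    mk_range_le.trans (mk_list_eq_mk L).le⟩
  refine dense_pi_of_forall_finset fun x I =>
    ⟨_, ⟨(List.range (I.sup id + 1)).map x, rfl⟩, fun i hi => ?_⟩
  have : i < I.sup id + 1 := Nat.lt_succ_of_le (I.le_sup (f := id) hi)
  simp [this]

theorem exists_isNowhereDense_forall_not_subset {ι L : Type*} [Infinite ι] [TopologicalSpace L]
    [DiscreteTopology L] [Nontrivial L] (w : L → Set (ι → L))
    (hw : ∀ a, IsNowhereDense (w a)) :
    ∃ F : Set (ι → L), IsNowhereDense F ∧ ∀ a, ¬ F ⊆ w a := by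
  obtain ⟨i₀⟩ : Nonempty ι := inferInstance
  have hp (a : L) : ∃ p ∈ {p : ι → L | p i₀ = a}, p ∉ closure (w a) :=
    (hw a).exists_mem_notMem_closure
      ((isOpen_discrete {a}).preimage (continuous_apply (A := fun _ : ι => L) i₀))
      ⟨fun _ => a, rfl⟩
  choose p hp₀ hpw using hp
  exact ⟨range p, isNowhereDense_range_of_apply_eq hp₀,
    fun a h => hpw a (subset_closure (h ⟨a, rfl⟩))⟩

/-- Let `λ = #L` be an infinite cardinal (realized by an infinite discrete space `L`)
and let `λ^ω = (ℕ → L)` carry the product topology. Then every subset of `λ^ω` of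
cardinality less than `λ` is nowhere dense, `non(nwd_{λ^ω}) = λ`, and
`cof(nwd_{λ^ω}) > λ`. -/
theorem nwd_invariants_discrete_power {L : Type u}
    [TopologicalSpace L] [DiscreteTopology L] [Infinite L] :
    (∀ s : Set (ℕ → L), Cardinal.mk s < Cardinal.mk L → IsNowhereDense s) ∧
    nonNwd (ℕ → L) = Cardinal.mk L ∧
    Cardinal.mk L < cofNwd (ℕ → L) := by
  have hsmall : ∀ s : Set (ℕ → L), #s < #L → IsNowhereDense s :=
    fun _ hs => isNowhereDense_of_mk_lt (by rwa [lift_uzero])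
  obtain ⟨D, hD, hDL⟩ := exists_dense_mk_le L
  exact ⟨hsmall, nonNwd_eq hsmall ⟨D, hDL, hD.not_isNowhereDense⟩,
    lt_cofNwd exists_isNowhereDense_forall_not_subset⟩
end
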